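/- Let c, n be positive integers, let b, w₁, …, w_n ∈ ℕ each have at most c bits (i.e. b < 2^c and w_i < 2^c for all i), and let α₁, …, α_n ∈ {−1, +1}. Then there exist universal constants c₁, c₂ > 0 such that there is a ReLU network N : ℝ → ℝ of width at most 8, depth at most c₁ · n·c, and all weights bounded in absolute value by c₂ · 2^{n·c}, such that for every x ∈ ℕ with x < 2^{n·c}: N(x) = σ( Σ_{i=1}^{n} α_i w_i · BIN_{(i−1)c+1 : ic}(x) + b ), where σ(z) = max{0,z}. -/

import Mathlib

open scoped BigOperators

noncomputable section

/-- The ReLU activation function. -/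
def relu (x : ℝ) : ℝ := max 0 x

/-- One affine layer of a neural network: a weight matrix and a bias vector. -/
structure Layer (nin nout : ℕ) where
  W : Matrix (Fin nout) (Fin nin) ℝ
  b : Fin nout → ℝ

/-- The affine map computed by a layer. -/
def Layer.affine {nin nout : ℕ} (l : Layer nin nout) (x : Fin nin → ℝ) : Fin nout → ℝ :=
  fun i => (∑ j, l.W i j * x j) + l.b i

/-- A ReLU network: a nonempty sequence of affine layers; ReLU is applied after
every layer except the last one. -/
inductive Net : ℕ → ℕ → Type
  | last {nin nout : ℕ} : Layer nin nout → Net nin nout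
  | cons {nin k nout : ℕ} : Layer nin k → Net k nout → Net nin nout

namespace Net

/-- Evaluation of a ReLU network. -/
def eval : {nin nout : ℕ} → Net nin nout → (Fin nin → ℝ) → (Fin nout → ℝ)
  | _, _, .last l, x => l.affine x
  | _, _, .cons l rest, x => rest.eval (fun i => relu (l.affine x i))

/-- The depth (number of layers) of a network. -/
def depth : {nin nout : ℕ} → Net nin nout → ℕ
  | _, _, .last _ => 1
  | _, _, .cons _ rest => rest.depth + 1

/-- The width of a network: the maximum of the input dimension and all
intermediate layer dimensions. -/
def width : {nin nout : ℕ} → Net nin nout → ℕ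
  | nin, _, .last _ => nin
  | nin, _, .cons _ rest => max nin rest.width

/-- The number of parameters of a network: the total number of entries of all
weight matrices and bias vectors. -/
def params : {nin nout : ℕ} → Net nin nout → ℕ
  | nin, nout, .last _ => nout * nin + nout
  | nin, _, .cons (k := k) _ rest => (k * nin + k) + rest.params

/-- All weights (matrix entries and biases) of the network lie in the set `s`. -/
def weightsIn (s : Set ℝ) : {nin nout : ℕ} → Net nin nout → Prop
  | _, _, .last l => (∀ i j, l.W i j ∈ s) ∧ (∀ i, l.b i ∈ s)
  | _, _, .cons l rest => ((∀ i j, l.W i j ∈ s) ∧ (∀ i, l.b i ∈ s)) ∧ rest.weightsIn s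

/-- The bias vector of the output layer of a network. -/
def lastBias : {nin nout : ℕ} → Net nin nout → (Fin nout → ℝ)
  | _, _, .last l => l.b
  | _, _, .cons _ rest => rest.lastBias

end Net

/-- `BIN a b m` is the integer formed by bits `a` through `b` (1-indexed from the
least significant bit) of the binary representation of `m`. -/
def BIN (a b m : ℕ) : ℕ := (m / 2^(a-1)) % 2^(b - a + 1)

end

noncomputable section Aux

open Finset

lemma relu_of_nonneg {x : ℝ} (h : 0 ≤ x) : relu x = x := max_eq_right h

lemma relu_of_nonpos {x : ℝ} (h : x ≤ 0) : relu x = 0 := max_eq_left h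

lemma relu_nonneg (x : ℝ) : 0 ≤ relu x := le_max_left _ _

lemma relu_sub_relu_neg (x : ℝ) : relu x - relu (-x) = x := by
  unfold relu; rcases le_total x 0 with h | h
  · rw [max_eq_left h, max_eq_right (by linarith)]; ring
  · rw [max_eq_right h, max_eq_left (by linarith)]; ring

/-- input layer: x ↦ (x, b, 0) -/
def L0 (b : ℝ) : Layer 1 3 := ⟨!![(1:ℝ); 0; 0], ![0, b, 0]⟩

/-- bit-extraction layer: (r,p,q) ↦ (r, p, q, r-(2^k-1), r-2^k) -/
def LA (k : ℕ) : Layer 3 5 :=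
  ⟨!![(1:ℝ),0,0; 0,1,0; 0,0,1; 1,0,0; 1,0,0], ![0,0,0, -((2:ℝ)^k - 1), -((2:ℝ)^k)]⟩

/-- (r,p,q,t1,t2) ↦ (r - 2^k(t1-t2), p-q, q-p, m(t1-t2)) -/
def LB (k : ℕ) (m : ℝ) : Layer 5 4 :=
  ⟨!![(1:ℝ),0,0,-(2:ℝ)^k,(2:ℝ)^k; 0,1,-1,0,0; 0,-1,1,0,0; 0,0,0,m,-m], ![0,0,0,0]⟩

/-- (r,p,q,u) ↦ (r, p-q+a·u, q-p-a·u) -/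
def LC (a : ℝ) : Layer 4 3 :=
  ⟨!![(1:ℝ),0,0,0; 0,1,-1,a; 0,-1,1,-a], ![0,0,0]⟩

/-- (r,p,q) ↦ relu(p-q) ↦ output -/
def tailNet : Net 3 1 := .cons ⟨!![(0:ℝ),1,-1], ![0]⟩ (.last ⟨!![(1:ℝ)], ![0]⟩)

def body (coef : ℕ → ℝ × ℝ) : ℕ → Net 3 1
  | 0 => tailNet
  | k+1 => .cons (LA k) (.cons (LB k (coef k).2) (.cons (LC (coef k).1) (body coef k)))

def fullNet (b : ℝ) (coef : ℕ → ℝ × ℝ) (K : ℕ) : Net 1 1 := .cons (L0 b) (body coef K)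

lemma body_width (coef : ℕ → ℝ × ℝ) (K : ℕ) : (body coef K).width ≤ 5 := by
  induction K with
  | zero => simp [body, tailNet, Net.width]
  | succ k ih => simp only [body, Net.width]; omega

lemma body_depth (coef : ℕ → ℝ × ℝ) (K : ℕ) : (body coef K).depth = 3 * K + 2 := by
  induction K with
  | zero => simp [body, tailNet, Net.depth]
  | succ k ih => simp only [body, Net.depth, ih]; ring

lemma body_weightsIn (coef : ℕ → ℝ × ℝ) (K : ℕ) (B : ℝ) (hB : 1 ≤ B)
    (h1 : ∀ j < K, (2:ℝ)^j ≤ B)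
    (h2 : ∀ j < K, |(coef j).1| ≤ B)
    (h3 : ∀ j < K, |(coef j).2| ≤ B) :
    (body coef K).weightsIn (Set.Icc (-B) B) := by
  induction K with
  | zero =>
    refine ⟨⟨fun i j => ?_, fun i => ?_⟩, fun i j => ?_, fun i => ?_⟩ <;>
        fin_cases i <;> (try fin_cases j) <;> simp [tailNet, Set.mem_Icc, Matrix.vecHead, Matrix.vecTail] <;>
      first | (constructor <;> linarith) | linarith | skip
  | succ k ih =>
    have hk := h1 k (by omega)
    have hknn : (0:ℝ) ≤ 2^k := by positivity
    have ha := abs_le.mp (h2 k (by omega))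
    have hm := abs_le.mp (h3 k (by omega))
    refine ⟨⟨fun i j => ?_, fun i => ?_⟩, ⟨⟨fun i j => ?_, fun i => ?_⟩,
      ⟨fun i j => ?_, fun i => ?_⟩, ?_⟩⟩
    · fin_cases i <;> fin_cases j <;> simp [LA, Set.mem_Icc, Matrix.vecHead, Matrix.vecTail] <;> first | (constructor <;> linarith) | linarith | skip
    · fin_cases i <;> simp [LA, Set.mem_Icc, Matrix.vecHead, Matrix.vecTail] <;> first | (constructor <;> linarith) | linarith | skip
    · fin_cases i <;> fin_cases j <;> simp [LB, Set.mem_Icc, Matrix.vecHead, Matrix.vecTail] <;> first | (constructor <;> linarith) | linarith | skip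
    · fin_cases i <;> simp [LB, Set.mem_Icc, Matrix.vecHead, Matrix.vecTail] <;> first | (constructor <;> linarith) | linarith | skip
    · fin_cases i <;> fin_cases j <;> simp [LC, Set.mem_Icc, Matrix.vecHead, Matrix.vecTail] <;> first | (constructor <;> linarith) | linarith | skip
    · fin_cases i <;> simp [LC, Set.mem_Icc, Matrix.vecHead, Matrix.vecTail] <;> first | (constructor <;> linarith) | linarith | skip
    · exact ih (fun j hj => h1 j (by omega)) (fun j hj => h2 j (by omega))
        (fun j hj => h3 j (by omega))

lemma bit_mod_pow {r j k : ℕ} (h : j < k) : (r % 2^k) / 2^j % 2 = r / 2^j % 2 := by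
  have h1 : (2:ℕ)^k = 2^j * 2^(k-j) := by rw [← pow_add]; congr 1; omega
  have hj : 0 < (2:ℕ)^j := pow_pos (by norm_num) _
  rw [h1, Nat.mod_mul, Nat.add_mul_div_left _ _ hj, Nat.div_eq_of_lt (Nat.mod_lt _ hj),
    Nat.zero_add, Nat.mod_mod_of_dvd _ (dvd_pow_self 2 (by omega))]

lemma mod_pow_sum (cc m : ℕ) : m % 2^cc = ∑ t ∈ range cc, 2^t * (m / 2^t % 2) := by
  induction cc with
  | zero => simp [Nat.mod_one]
  | succ c ih =>
    rw [sum_range_succ, ← ih, pow_succ, Nat.mod_mul]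

lemma body_eval (coef : ℕ → ℝ × ℝ) (hm : ∀ j, 0 ≤ (coef j).2) :
    ∀ (k : ℕ) (r : ℕ), r < 2^k → ∀ p q : ℝ, 0 ≤ p → 0 ≤ q →
    (body coef k).eval ![(r:ℝ), p, q] 0
      = relu ((p - q) + ∑ j ∈ Finset.range k,
          (coef j).1 * (coef j).2 * ((r / 2^j % 2 : ℕ) : ℝ)) := by
  intro k
  induction k with
  | zero =>
    intro r hr p q hp hq
    simp [body, tailNet, Net.eval, Layer.affine, Fin.sum_univ_three, Fin.sum_univ_one,
      sub_eq_add_neg]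
  | succ k ih =>
    intro r hr p q hp hq
    set d : ℕ := r / 2^k with hd
    have h2kpos : (0:ℕ) < 2^k := pow_pos (by norm_num) _
    have hd01 : d = 0 ∨ d = 1 := by
      have h2 : d < 2 := Nat.div_lt_of_lt_mul (by rw [pow_succ] at hr; linarith)
      exact Nat.le_one_iff_eq_zero_or_eq_one.mp (Nat.le_of_lt_succ h2)
    have hrmod : r % 2^k < 2^k := Nat.mod_lt _ h2kpos
    have h2k : (0:ℝ) < 2^k := by positivity
    set t1 : ℝ := relu ((r:ℝ) - ((2:ℝ)^k - 1)) with ht1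
    set t2 : ℝ := relu ((r:ℝ) - (2:ℝ)^k) with ht2
    have ht12 : t1 - t2 = (d:ℝ) := by
      rcases Nat.lt_or_ge r (2^k) with h | h
      · have hr' : (r:ℝ) + 1 ≤ (2:ℝ)^k := by exact_mod_cast Nat.succ_le_of_lt h
        have hd0 : d = 0 := Nat.div_eq_of_lt h
        rw [ht1, ht2, relu_of_nonpos (by linarith), relu_of_nonpos (by linarith), hd0]
        simp
      · have hr' : ((2:ℝ)^k) ≤ (r:ℝ) := by exact_mod_cast h
        have hd1 : d = 1 := by
          have h1 : 1 ≤ d := (Nat.one_le_div_iff h2kpos).mpr h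
          omega
        rw [ht1, ht2, relu_of_nonneg (by linarith), relu_of_nonneg (by linarith), hd1]
        push_cast; ring
    have hrcast : ((r % 2^k : ℕ) : ℝ) = (r:ℝ) - 2^k * d := by
      have h := Nat.div_add_mod r (2^k)
      have h' : ((2^k * d + r % 2^k : ℕ) : ℝ) = (r:ℝ) := by rw [hd, h]
      push_cast at h'
      linarith
    set a : ℝ := (coef k).1 with hA
    set m : ℝ := (coef k).2 with hM
    set s' : ℝ := (p - q) + a * (m * d) with hs'
    -- step through three layers
    show (body coef k).eval (fun i => relu ((LC a).affine
      (fun i => relu ((LB k m).affine (fun i => relu ((LA k).affine ![(r:ℝ),p,q] i)) i)) i)) 0 = _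
    have hr0 : (0:ℝ) ≤ (r:ℝ) := Nat.cast_nonneg r
    have e1 : (fun i => relu ((LA k).affine ![(r:ℝ),p,q] i)) = ![(r:ℝ), p, q, t1, t2] := by
      funext i
      fin_cases i
      · simpa [LA, Layer.affine, Fin.sum_univ_three] using relu_of_nonneg hr0
      · simpa [LA, Layer.affine, Fin.sum_univ_three] using relu_of_nonneg hp
      · simpa [LA, Layer.affine, Fin.sum_univ_three] using relu_of_nonneg hq
      · simp [LA, Layer.affine, Fin.sum_univ_three, ht1, Matrix.vecHead, Matrix.vecTail]
        try (congr 1 <;> ring)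
      · simp [LA, Layer.affine, Fin.sum_univ_three, ht2, Matrix.vecHead, Matrix.vecTail]
        try (congr 1 <;> ring)
    rw [e1]
    have e2 : (fun i => relu ((LB k m).affine ![(r:ℝ), p, q, t1, t2] i))
        = ![((r % 2^k : ℕ) : ℝ), relu (p - q), relu (q - p), m * d] := by
      have hmd : (0:ℝ) ≤ m * d := by
        rw [hM]; exact mul_nonneg (hm k) (Nat.cast_nonneg d)
      funext i
      fin_cases i
      · simp only [Fin.zero_eta, Matrix.cons_val_zero]
        have : (LB k m).affine ![(r:ℝ), p, q, t1, t2] 0 = ((r % 2^k : ℕ) : ℝ) := by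
          simp [LB, Layer.affine, Fin.sum_univ_five]
          rw [hrcast, ← ht12]; ring
        rw [this, relu_of_nonneg (Nat.cast_nonneg _)]
      · have : (LB k m).affine ![(r:ℝ), p, q, t1, t2] 1 = p - q := by
          simp [LB, Layer.affine, Fin.sum_univ_five]; ring
        simp only [Fin.mk_one, Matrix.cons_val_one, Matrix.head_cons, this, Matrix.cons_val_zero]
      · have h22 : (LB k m).affine ![(r:ℝ), p, q, t1, t2] 2 = q - p := by
          simp [LB, Layer.affine, Fin.sum_univ_five, Matrix.vecHead, Matrix.vecTail]; ring
        show relu ((LB k m).affine ![(r:ℝ), p, q, t1, t2] 2) = relu (q - p)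
        rw [h22]
      · have h23 : (LB k m).affine ![(r:ℝ), p, q, t1, t2] 3 = m * d := by
          simp [LB, Layer.affine, Fin.sum_univ_five, Matrix.vecHead, Matrix.vecTail]
          rw [← ht12]; ring
        show relu ((LB k m).affine ![(r:ℝ), p, q, t1, t2] 3) = m * d
        rw [h23]
        exact relu_of_nonneg hmd
    rw [e2]
    have e3 : (fun i => relu ((LC a).affine
        ![((r % 2^k : ℕ) : ℝ), relu (p - q), relu (q - p), m * d] i))
        = ![((r % 2^k : ℕ) : ℝ), relu s', relu (-s')] := by
      have hpq : relu (p - q) - relu (q - p) = p - q := by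
        rw [show q - p = -(p - q) by ring]; exact relu_sub_relu_neg _
      funext i
      fin_cases i
      · have : (LC a).affine ![((r % 2^k : ℕ) : ℝ), relu (p - q), relu (q - p), m * d] 0
            = ((r % 2^k : ℕ) : ℝ) := by
          simp [LC, Layer.affine, Fin.sum_univ_four]
        simp only [Fin.zero_eta, Matrix.cons_val_zero, this]
        exact relu_of_nonneg (Nat.cast_nonneg _)
      · have : (LC a).affine ![((r % 2^k : ℕ) : ℝ), relu (p - q), relu (q - p), m * d] 1
            = s' := by
          simp [LC, Layer.affine, Fin.sum_univ_four]
          rw [hs']; linarith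
        simp only [Fin.mk_one, Matrix.cons_val_one, Matrix.head_cons, this, Matrix.cons_val_zero]
      · have h32 : (LC a).affine ![((r % 2^k : ℕ) : ℝ), relu (p - q), relu (q - p), m * d] 2
            = -s' := by
          simp [LC, Layer.affine, Fin.sum_univ_four, Matrix.vecHead, Matrix.vecTail]
          rw [hs']; linarith
        show relu ((LC a).affine
          ![((r % 2^k : ℕ) : ℝ), relu (p - q), relu (q - p), m * d] 2) = relu (-s')
        rw [h32]
    rw [e3, ih (r % 2^k) hrmod (relu s') (relu (-s')) (relu_nonneg _) (relu_nonneg _)]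
    have hpq' : relu s' - relu (-s') = s' := relu_sub_relu_neg _
    rw [hpq']
    congr 1
    rw [Finset.sum_range_succ]
    have hsum : ∀ j ∈ Finset.range k,
        (coef j).1 * (coef j).2 * (((r % 2^k) / 2^j % 2 : ℕ) : ℝ)
        = (coef j).1 * (coef j).2 * ((r / 2^j % 2 : ℕ) : ℝ) := by
      intro j hj
      rw [bit_mod_pow (Finset.mem_range.mp hj)]
    have hdm : r / 2^k % 2 = r / 2^k := by
      rcases hd01 with h|h <;> rw [hd] at h <;> omega
    rw [Finset.sum_congr rfl hsum, hs', hd, hdm]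
    push_cast
    ring

lemma sum_range_mul_split (f : ℕ → ℝ) (n c : ℕ) :
    ∑ j ∈ range (n*c), f j = ∑ i ∈ range n, ∑ t ∈ range c, f (i*c + t) := by
  induction n with
  | zero => simp
  | succ n ih =>
    rw [show (n+1)*c = n*c + c by ring, Finset.sum_range_add, ih, sum_range_succ]

theorem stmt7 :
    ∃ c₁ c₂ : ℝ, 0 < c₁ ∧ 0 < c₂ ∧
    ∀ (c n : ℕ), 0 < c → 0 < n →
    ∀ (b : ℕ) (w : Fin n → ℕ) (α : Fin n → ℝ),
      b < 2^c → (∀ i, w i < 2^c) → (∀ i, α i = 1 ∨ α i = -1) →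
    ∃ N : Net 1 1,
      N.width ≤ 8 ∧
      (N.depth : ℝ) ≤ c₁ * ((n : ℝ) * c) ∧
      N.weightsIn (Set.Icc (-(c₂ * 2^(n * c))) (c₂ * 2^(n * c))) ∧
      ∀ x : ℕ, x < 2^(n * c) →
        N.eval (fun _ => (x : ℝ)) 0 =
          relu ((∑ i : Fin n,
            α i * (w i : ℝ) * (BIN ((i : ℕ) * c + 1) (((i : ℕ) + 1) * c) x : ℝ)) + (b : ℝ)) := by
  refine ⟨6, 1, by norm_num, by norm_num, ?_⟩
  intro c n hc hn b w α hb hw hα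
  set K := n * c with hK
  have hK1 : 1 ≤ K := Nat.one_le_iff_ne_zero.mpr (by positivity)
  have hcK : c ≤ K := Nat.le_mul_of_pos_left c hn
  set coef : ℕ → ℝ × ℝ := fun j =>
    (if h : j / c < n then α ⟨j/c, h⟩ * (w ⟨j/c, h⟩ : ℝ) else 0, (2:ℝ)^(j % c)) with hcoef
  refine ⟨fullNet (b:ℝ) coef K, ?_, ?_, ?_, ?_⟩
  · -- width
    have := body_width coef K
    simp only [fullNet, Net.width]
    omega
  · -- depth
    simp only [fullNet, Net.depth, body_depth]
    have : ((3 * K + 2 + 1 : ℕ) : ℝ) ≤ 6 * K := by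
      push_cast
      have : (1:ℝ) ≤ (K:ℝ) := by exact_mod_cast hK1
      linarith
    calc ((3 * K + 2 + 1 : ℕ) : ℝ) ≤ 6 * K := this
      _ = 6 * ((n:ℝ) * c) := by rw [hK]; push_cast; ring
  · -- weights
    have hB1 : (1:ℝ) ≤ 2^K := one_le_pow₀ (by norm_num)
    have hBub : ∀ j : ℕ, j ≤ K → (2:ℝ)^j ≤ 2^K := fun j hj =>
      pow_le_pow_right₀ (by norm_num) hj
    have hα1 : ∀ i, |α i| = 1 := by
      intro i; rcases hα i with h | h <;> rw [h] <;> norm_num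
    have hbody : (body coef K).weightsIn (Set.Icc (-(2^K : ℝ)) (2^K : ℝ)) := by
      refine body_weightsIn coef K _ hB1 (fun j hj => hBub j (by omega)) ?_ ?_
      · intro j hj
        simp only [hcoef]
        split_ifs with h
        · rw [abs_mul, hα1, one_mul, abs_of_nonneg (by positivity)]
          calc ((w ⟨j/c, h⟩ : ℕ) : ℝ) ≤ 2^c := by
                have := hw ⟨j/c, h⟩; exact_mod_cast this.le
            _ ≤ 2^K := hBub c hcK
        · simpa using le_trans zero_le_one hB1
      · intro j hj
        rw [abs_of_nonneg (by positivity)]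
        exact hBub _ (le_trans (Nat.mod_lt j hc).le hcK)
    have hble : ((b:ℕ):ℝ) ≤ 2^K := by
      calc ((b:ℕ):ℝ) ≤ 2^c := by exact_mod_cast hb.le
        _ ≤ 2^K := hBub c hcK
    have hbge : -(2^K : ℝ) ≤ (b:ℝ) := by
      have h0 : (0:ℝ) ≤ (b:ℝ) := Nat.cast_nonneg b
      linarith
    have : (fullNet (b:ℝ) coef K).weightsIn (Set.Icc (-(2^K : ℝ)) (2^K : ℝ)) := by
      refine ⟨⟨fun i j => ?_, fun i => ?_⟩, hbody⟩
      · fin_cases i <;> fin_cases j <;>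
          simp [fullNet, L0, Set.mem_Icc, Matrix.vecHead, Matrix.vecTail] <;>
          first | (constructor <;> linarith) | linarith | skip
      · fin_cases i <;>
          simp [fullNet, L0, Set.mem_Icc, Matrix.vecHead, Matrix.vecTail] <;>
          first | (constructor <;> linarith) | linarith | skip
    simpa [one_mul] using this
  · -- evaluation
    intro x hx
    have hm : ∀ j, 0 ≤ (coef j).2 := fun j => by simp only [hcoef]; positivity
    have hb0 : (0:ℝ) ≤ (b:ℝ) := Nat.cast_nonneg b
    have e0 : (fun i => relu ((L0 (b:ℝ)).affine (fun _ => (x:ℝ)) i))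
        = ![(x:ℝ), (b:ℝ), 0] := by
      funext i
      fin_cases i
      · simpa [L0, Layer.affine, Fin.sum_univ_one] using relu_of_nonneg (Nat.cast_nonneg x)
      · simpa [L0, Layer.affine, Fin.sum_univ_one, Matrix.vecHead, Matrix.vecTail]
          using relu_of_nonneg hb0
      · simpa [L0, Layer.affine, Fin.sum_univ_one, Matrix.vecHead, Matrix.vecTail]
          using relu_of_nonpos (le_refl (0:ℝ))
    have hBIN : ∀ i : ℕ, BIN (i*c + 1) ((i+1)*c) x = x / 2^(i*c) % 2^c := by
      intro i
      unfold BIN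
      have h1 : i*c + 1 - 1 = i*c := by omega
      have h2 : (i+1)*c - (i*c+1) + 1 = c := by
        have h3 : (i+1)*c = i*c + c := by ring
        omega
      rw [h1, h2]
    have hsums : ∑ j ∈ Finset.range K, (coef j).1 * (coef j).2 * ((x / 2^j % 2 : ℕ) : ℝ)
        = ∑ i : Fin n, α i * (w i : ℝ) * ((BIN ((i:ℕ)*c + 1) (((i:ℕ)+1)*c) x : ℕ) : ℝ) := by
      rw [hK, sum_range_mul_split
        (fun j => (coef j).1 * (coef j).2 * ((x / 2^j % 2 : ℕ) : ℝ)) n c]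
      rw [← Fin.sum_univ_eq_sum_range
        (fun i => ∑ t ∈ range c, (coef (i*c + t)).1 * (coef (i*c + t)).2
          * ((x / 2^(i*c + t) % 2 : ℕ) : ℝ)) n]
      apply Finset.sum_congr rfl
      intro i _
      rw [hBIN (i:ℕ), mod_pow_sum c (x / 2^((i:ℕ)*c))]
      push_cast
      rw [Finset.mul_sum]
      apply Finset.sum_congr rfl
      intro t ht
      have htc : t < c := Finset.mem_range.mp ht
      have hdiv : ((i:ℕ)*c + t)/c = (i:ℕ) := by
        rw [show (i:ℕ)*c + t = c*(i:ℕ) + t by ring, Nat.mul_add_div hc,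
          Nat.div_eq_of_lt htc, Nat.add_zero]
      have hmod : ((i:ℕ)*c + t) % c = t := by
        rw [show (i:ℕ)*c + t = t + (i:ℕ)*c by ring, Nat.add_mul_mod_self_right]
        exact Nat.mod_eq_of_lt htc
      have hdd : x / 2^((i:ℕ)*c) / 2^t = x / 2^((i:ℕ)*c + t) := by
        rw [Nat.div_div_eq_div_mul, ← pow_add]
      simp only [hcoef, hdiv, hmod, dif_pos i.isLt, Fin.eta, hdd]
      push_cast
      ring
    show (body coef K).eval (fun i => relu ((L0 (b:ℝ)).affine (fun _ => (x:ℝ)) i)) 0 = _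
    rw [e0, body_eval coef hm K x hx (b:ℝ) 0 hb0 le_rfl]
    congr 1
    rw [sub_zero, hsums]
    ring

end Aux
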